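/- Sum formula: for all integers n ≥ 0 and k ≥ 1, 2k·∑_{i=0}^{n} B_{k,i} = (2k+1)·B_{k,n} − (k−1)·B_{k,n−1} − 1 (interpreting B_{k,−1} via the recurrence when n = 0; equivalently, for n ≥ 1). -/
import Mathlib


def B (k : ℤ) : ℕ → ℤ
  | 0 => 0
  | 1 => 1
  | (n+2) => 3*k * B k (n+1) + (1-k) * B k n

theorem stmt12 (k : ℤ) (hk : 1 ≤ k) (n : ℕ) (hn : 1 ≤ n) :
    2*k * (Finset.range (n+1)).sum (fun i => B k i) =
      (2*k+1) * B k n - (k-1) * B k (n-1) - 1 := by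
  induction n, hn using Nat.le_induction with
  | base =>
    rw [Finset.sum_range_succ, Finset.sum_range_one]
    show 2*k*(B k 0 + B k 1) = (2*k+1) * B k 1 - (k-1) * B k 0 - 1
    simp [B]
  | succ m hm ih =>
    obtain ⟨p, rfl⟩ : ∃ p, m = p + 1 := ⟨m - 1, by omega⟩
    rw [Finset.sum_range_succ]
    show 2 * k * ((Finset.range (p + 1 + 1)).sum (fun i => B k i) + B k (p+2)) =
      (2*k+1) * (3*k * B k (p+1) + (1-k) * B k p) - (k-1) * B k (p+1) - 1
    rw [show B k (p + 2) = 3*k * B k (p+1) + (1-k) * B k p from rfl]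
    simp only [Nat.add_sub_cancel] at ih
    linear_combination ih
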